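/- Let f, g : Finset H → {0,1} ⊆ ℝ be increasing functions and define, for the S-strategy, G(S) = 1 - (f⋆g)(S) - ((1-f)⋆(1-g))(S), the probability of exactly one 'success'. Then G is a decreasing function of S: S ⊇ T implies G(S) ≤ G(T). -/
import Mathlib

open Finset

noncomputable section

variable {H : Type*}

/-- P(X,Y) = ∏_{h∈X∩Y} p_h · ∏_{h∈X∖Y} (1-p_h) -/
def wtP [DecidableEq H] (p : H → ℝ) (X Y : Finset H) : ℝ :=
  (∏ h ∈ X ∩ Y, p h) * ∏ h ∈ X \ Y, (1 - p h)

/-- Coupled coin-tossing measure μ_S on pairs of subsets of H. -/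
def muPair [Fintype H] [DecidableEq H] (p : H → ℝ) (S S₁ S₂ : Finset H) : ℝ :=
  if S ∩ S₁ = S ∩ S₂ then
    wtP p S S₁ * wtP p (univ \ S) S₁ * wtP p (univ \ S) S₂
  else 0

/-- Convolution (f ⋆ g)(S) = Σ_{S₁,S₂} f(S₁) g(S₂) μ_S(S₁,S₂). -/
def starC [Fintype H] [DecidableEq H] (p : H → ℝ) (f g : Finset H → ℝ) (S : Finset H) : ℝ :=
  ∑ S₁ : Finset H, ∑ S₂ : Finset H, f S₁ * g S₂ * muPair p S S₁ S₂

/-- Product Bernoulli measure μ(S) = ∏_{h∈S} p_h ∏_{h∉S} (1-p_h). -/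
def muB [Fintype H] [DecidableEq H] (p : H → ℝ) (S : Finset H) : ℝ :=
  (∏ h ∈ S, p h) * ∏ h ∈ Sᶜ, (1 - p h)

/-- Expectation with respect to the product Bernoulli measure. -/
def expB [Fintype H] [DecidableEq H] (p : H → ℝ) (f : Finset H → ℝ) : ℝ :=
  ∑ S : Finset H, f S * muB p S

section Helpers

variable [DecidableEq H] (p : H → ℝ)

lemma wtP_nonneg (hp : ∀ h, 0 ≤ p h ∧ p h ≤ 1) (X Y : Finset H) : 0 ≤ wtP p X Y := by
  refine mul_nonneg (prod_nonneg fun i _ => (hp i).1) (prod_nonneg fun i _ => ?_)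
  linarith [(hp i).2]

lemma wtP_right_insert {h : H} {B : Finset H} (A : Finset H) (hB : h ∉ B) :
    wtP p B (insert h A) = wtP p B A := by
  unfold wtP
  rw [inter_insert_of_notMem hB, sdiff_insert, erase_eq_of_notMem]
  exact fun hm => hB (mem_sdiff.1 hm).1

lemma wtP_insert_left {h : H} {B A : Finset H} (hB : h ∉ B) (hA : h ∉ A) :
    wtP p (insert h B) A = (1 - p h) * wtP p B A := by
  unfold wtP
  rw [insert_inter_of_notMem hA, insert_sdiff_of_notMem _ hA,
    prod_insert (fun hm => hB (mem_sdiff.1 hm).1)]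
  ring

lemma wtP_insert_left_insert {h : H} {B A : Finset H} (hB : h ∉ B) (hA : h ∉ A) :
    wtP p (insert h B) (insert h A) = p h * wtP p B A := by
  unfold wtP
  rw [insert_inter_of_mem (mem_insert_self h A), inter_insert_of_notMem hB,
    prod_insert (fun hm => hB (mem_inter.1 hm).1), insert_sdiff_insert,
    sdiff_insert, erase_eq_of_notMem (fun hm => hB (mem_sdiff.1 hm).1)]
  ring

end Helpers

section Split

variable [Fintype H] [DecidableEq H]

lemma sum_split (h : H) (F : Finset H → ℝ) :
    ∑ A : Finset H, F A
      = ∑ A ∈ univ.filter (fun A : Finset H => h ∉ A), (F A + F (insert h A)) := by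
  rw [sum_add_distrib, ← Finset.sum_filter_add_sum_filter_not univ (fun A : Finset H => h ∉ A) F]
  congr 1
  refine Finset.sum_bij' (fun A _ => A.erase h) (fun A _ => insert h A) ?_ ?_ ?_ ?_ ?_
  · intro A hA
    simp only [mem_filter, mem_univ, true_and] at hA ⊢
    simp [hA]
  · intro A hA
    simp only [mem_filter, mem_univ, true_and] at hA ⊢
    simpa using hA
  · intro A hA
    simp only [mem_filter, mem_univ, true_and, not_not] at hA
    exact insert_erase hA
  · intro A hA
    simp only [mem_filter, mem_univ, true_and] at hA
    exact erase_insert hA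
  · intro A hA
    simp only [mem_filter, mem_univ, true_and, not_not] at hA
    rw [insert_erase hA]

lemma starC_expand (p : H → ℝ) (u v : Finset H → ℝ) (S : Finset H) (h : H) :
    starC p u v S
      = ∑ A₁ ∈ univ.filter (fun A : Finset H => h ∉ A),
          ∑ A₂ ∈ univ.filter (fun A : Finset H => h ∉ A),
            (u A₁ * v A₂ * muPair p S A₁ A₂
              + u A₁ * v (insert h A₂) * muPair p S A₁ (insert h A₂)
              + u (insert h A₁) * v A₂ * muPair p S (insert h A₁) A₂
              + u (insert h A₁) * v (insert h A₂) * muPair p S (insert h A₁) (insert h A₂)) := by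
  unfold starC
  rw [sum_split h]
  refine Finset.sum_congr rfl fun A₁ _ => ?_
  rw [sum_split h (fun S₂ => u A₁ * v S₂ * muPair p S A₁ S₂),
    sum_split h (fun S₂ => u (insert h A₁) * v S₂ * muPair p S (insert h A₁) S₂),
    ← Finset.sum_add_distrib]
  refine Finset.sum_congr rfl fun A₂ _ => ?_
  ring

end Split

section Step

variable [Fintype H] [DecidableEq H]

lemma insert_eq_insert_iff' {a : H} {s t : Finset H} (hs : a ∉ s) (ht : a ∉ t) :
    insert a s = insert a t ↔ s = t := by
  constructor
  · intro he
    rw [← erase_insert hs, he, erase_insert ht]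
  · intro he; rw [he]

lemma univ_sdiff_eq (h : H) (T : Finset H) (hhT : h ∉ T) :
    (univ : Finset H) \ T = insert h (univ \ insert h T) := by
  ext x
  by_cases hx : x = h <;> simp [hx, hhT]

lemma step_lemma (p : H → ℝ) (hp : ∀ h, 0 ≤ p h ∧ p h ≤ 1) (f g : Finset H → ℝ)
    (hf : ∀ ⦃S T : Finset H⦄, T ⊆ S → f T ≤ f S)
    (hg : ∀ ⦃S T : Finset H⦄, T ⊆ S → g T ≤ g S)
    (h : H) (T : Finset H) (hhT : h ∉ T) :
    starC p f g T + starC p (fun A => 1 - f A) (fun A => 1 - g A) T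
      ≤ starC p f g (insert h T) + starC p (fun A => 1 - f A) (fun A => 1 - g A) (insert h T) := by
  rw [starC_expand p f g T h, starC_expand p _ _ T h, starC_expand p f g (insert h T) h,
    starC_expand p _ _ (insert h T) h, ← Finset.sum_add_distrib, ← Finset.sum_add_distrib]
  refine Finset.sum_le_sum fun A₁ hA₁ => ?_
  rw [← Finset.sum_add_distrib, ← Finset.sum_add_distrib]
  refine Finset.sum_le_sum fun A₂ hA₂ => ?_
  simp only [mem_filter, mem_univ, true_and] at hA₁ hA₂
  have hU : h ∉ (univ : Finset H) \ insert h T := by simp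
  have hUT : (univ : Finset H) \ T = insert h (univ \ insert h T) := univ_sdiff_eq h T hhT
  set q := p h with hq
  set w := wtP p T A₁ with hw
  set r₁ := wtP p (univ \ insert h T) A₁ with hr₁
  set r₂ := wtP p (univ \ insert h T) A₂ with hr₂
  have hnT1 : h ∉ T ∩ A₁ := fun hm => hhT (mem_inter.1 hm).1
  have hnT2 : h ∉ T ∩ A₂ := fun hm => hhT (mem_inter.1 hm).1
  -- intersection computations
  have i1 : T ∩ insert h A₁ = T ∩ A₁ := inter_insert_of_notMem hhT
  have i2 : T ∩ insert h A₂ = T ∩ A₂ := inter_insert_of_notMem hhT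
  have j1 : insert h T ∩ A₁ = T ∩ A₁ := insert_inter_of_notMem hA₁
  have j2 : insert h T ∩ A₂ = T ∩ A₂ := insert_inter_of_notMem hA₂
  have k1 : insert h T ∩ insert h A₁ = insert h (T ∩ A₁) := by
    rw [insert_inter_of_mem (mem_insert_self h A₁), i1]
  have k2 : insert h T ∩ insert h A₂ = insert h (T ∩ A₂) := by
    rw [insert_inter_of_mem (mem_insert_self h A₂), i2]
  by_cases hc : T ∩ A₁ = T ∩ A₂
  · -- coupled coin agrees; compute all eight measures
    have e1 : muPair p T A₁ A₂ = w * ((1 - q) * r₁) * ((1 - q) * r₂) := by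
      rw [muPair, if_pos hc, hUT, wtP_insert_left p hU hA₁, wtP_insert_left p hU hA₂]
    have e2 : muPair p T A₁ (insert h A₂) = w * ((1 - q) * r₁) * (q * r₂) := by
      rw [muPair, if_pos (by rw [i2]; exact hc), hUT, wtP_insert_left p hU hA₁,
        wtP_insert_left_insert p hU hA₂]
    have e3 : muPair p T (insert h A₁) A₂ = w * (q * r₁) * ((1 - q) * r₂) := by
      rw [muPair, if_pos (by rw [i1]; exact hc), hUT, wtP_insert_left_insert p hU hA₁,
        wtP_insert_left p hU hA₂, wtP_right_insert p A₁ hhT]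
    have e4 : muPair p T (insert h A₁) (insert h A₂) = w * (q * r₁) * (q * r₂) := by
      rw [muPair, if_pos (by rw [i1, i2]; exact hc), hUT, wtP_insert_left_insert p hU hA₁,
        wtP_insert_left_insert p hU hA₂, wtP_right_insert p A₁ hhT]
    have e5 : muPair p (insert h T) A₁ A₂ = ((1 - q) * w) * r₁ * r₂ := by
      rw [muPair, if_pos (by rw [j1, j2]; exact hc), wtP_insert_left p hhT hA₁]
    have e6 : muPair p (insert h T) A₁ (insert h A₂) = 0 := by
      rw [muPair, if_neg]
      rw [j1, k2]
      intro he
      exact hnT1 (he ▸ mem_insert_self h (T ∩ A₂))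
    have e7 : muPair p (insert h T) (insert h A₁) A₂ = 0 := by
      rw [muPair, if_neg]
      rw [j2, k1]
      intro he
      exact hnT2 (he ▸ mem_insert_self h (T ∩ A₁))
    have e8 : muPair p (insert h T) (insert h A₁) (insert h A₂) = (q * w) * r₁ * r₂ := by
      rw [muPair, if_pos (by rw [k1, k2, hc]), wtP_insert_left_insert p hhT hA₁,
        wtP_right_insert p A₁ hU, wtP_right_insert p A₂ hU]
    simp only [e1, e2, e3, e4, e5, e6, e7, e8, mul_zero, add_zero]
    have hwn : 0 ≤ w := wtP_nonneg p hp T A₁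
    have hrn₁ : 0 ≤ r₁ := wtP_nonneg p hp _ A₁
    have hrn₂ : 0 ≤ r₂ := wtP_nonneg p hp _ A₂
    have hq0 : 0 ≤ q := (hp h).1
    have hq1 : q ≤ 1 := (hp h).2
    have hfm : f A₁ ≤ f (insert h A₁) := hf (subset_insert h A₁)
    have hgm : g A₂ ≤ g (insert h A₂) := hg (subset_insert h A₂)
    have key : 0 ≤ q * (1 - q) * w * r₁ * r₂
        * ((f (insert h A₁) - f A₁) * (g (insert h A₂) - g A₂)) := by
      have := mul_nonneg (sub_nonneg.2 hfm) (sub_nonneg.2 hgm)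
      have h1q : (0:ℝ) ≤ 1 - q := by linarith
      positivity
    nlinarith [key]
  · -- coupled coins disagree: everything vanishes
    have e1 : muPair p T A₁ A₂ = 0 := by rw [muPair, if_neg hc]
    have e2 : muPair p T A₁ (insert h A₂) = 0 := by
      rw [muPair, if_neg]; rw [i2]; exact hc
    have e3 : muPair p T (insert h A₁) A₂ = 0 := by
      rw [muPair, if_neg]; rw [i1]; exact hc
    have e4 : muPair p T (insert h A₁) (insert h A₂) = 0 := by
      rw [muPair, if_neg]; rw [i1, i2]; exact hc
    have e5 : muPair p (insert h T) A₁ A₂ = 0 := by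
      rw [muPair, if_neg]; rw [j1, j2]; exact hc
    have e6 : muPair p (insert h T) A₁ (insert h A₂) = 0 := by
      rw [muPair, if_neg]
      rw [j1, k2]
      intro he
      exact hnT1 (he ▸ mem_insert_self h (T ∩ A₂))
    have e7 : muPair p (insert h T) (insert h A₁) A₂ = 0 := by
      rw [muPair, if_neg]
      rw [j2, k1]
      intro he
      exact hnT2 (he ▸ mem_insert_self h (T ∩ A₁))
    have e8 : muPair p (insert h T) (insert h A₁) (insert h A₂) = 0 := by
      rw [muPair, if_neg]
      rw [k1, k2, insert_eq_insert_iff' hnT1 hnT2]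
      exact hc
    simp [e1, e2, e3, e4, e5, e6, e7, e8]

end Step

theorem exactly_one_decreasing [Fintype H] [DecidableEq H] (p : H → ℝ)
    (hp : ∀ h, 0 ≤ p h ∧ p h ≤ 1) (f g : Finset H → ℝ)
    (hf01 : ∀ S, f S = 0 ∨ f S = 1) (hg01 : ∀ S, g S = 0 ∨ g S = 1)
    (hf : ∀ ⦃S T : Finset H⦄, T ⊆ S → f T ≤ f S)
    (hg : ∀ ⦃S T : Finset H⦄, T ⊆ S → g T ≤ g S) :
    ∀ ⦃S T : Finset H⦄, T ⊆ S →
      1 - starC p f g S - starC p (fun A => 1 - f A) (fun A => 1 - g A) S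
        ≤ 1 - starC p f g T - starC p (fun A => 1 - f A) (fun A => 1 - g A) T := by
  have main : ∀ n : ℕ, ∀ S T : Finset H, T ⊆ S → (S \ T).card = n →
      starC p f g T + starC p (fun A => 1 - f A) (fun A => 1 - g A) T
        ≤ starC p f g S + starC p (fun A => 1 - f A) (fun A => 1 - g A) S := by
    intro n
    induction n with
    | zero =>
      intro S T hTS hcard
      have hST : S = T := by
        have h1 : S \ T = ∅ := card_eq_zero.1 hcard
        refine Finset.Subset.antisymm (fun x hx => ?_) hTS
        by_contra hxT
        have : x ∈ S \ T := mem_sdiff.2 ⟨hx, hxT⟩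
        simp [h1] at this
      rw [hST]
    | succ n ih =>
      intro S T hTS hcard
      have hne : (S \ T).Nonempty := by
        rw [← card_pos, hcard]; omega
      obtain ⟨h, hh⟩ := hne
      have hhS : h ∈ S := (mem_sdiff.1 hh).1
      have hhT : h ∉ T := (mem_sdiff.1 hh).2
      have hsub : insert h T ⊆ S := insert_subset hhS hTS
      have hcard' : (S \ insert h T).card = n := by
        rw [sdiff_insert, card_erase_of_mem hh]
        omega
      calc starC p f g T + starC p (fun A => 1 - f A) (fun A => 1 - g A) T
          ≤ starC p f g (insert h T)
              + starC p (fun A => 1 - f A) (fun A => 1 - g A) (insert h T) :=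
            step_lemma p hp f g hf hg h T hhT
        _ ≤ starC p f g S + starC p (fun A => 1 - f A) (fun A => 1 - g A) S :=
            ih S (insert h T) hsub hcard'
  intro S T hTS
  have := main (S \ T).card S T hTS rfl
  linarith
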